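/- arXiv:2410.15563 — 2 statements merged into one kernel-verified Lean document; each statement's English description precedes it below -/
import Mathlib

section
/- Let (S_n) be a sequence of closed intervals S_n = [l_n, r_n] of length d_n with Σ_n d_n = L < ∞, and let β be a real contained in S_n for infinitely many n. Let α and c > 0 be such that for every n with β ∈ S_n there exists a real g_n with |α - g_n| ≤ c(β - l_n) + 2^{-n}. Define T_n = [g_n - (c·d_n + 2^{-n}), g_n + (c·d_n + 2^{-n})] whenever g_n is defined. Then Σ_n μ(T_n) ≤ 4 + 2cL, and α ∈ T_n for infinitely many n. -/
theorem stmt_14 (α β c L : ℝ) (hc : 0 < c)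
    (l r : ℕ → ℝ) (hlr : ∀ n, l n ≤ r n)
    (hL : HasSum (fun n => r n - l n) L)
    (hβ : ∃ᶠ n in Filter.atTop, β ∈ Set.Icc (l n) (r n))
    (g : ℕ → ℝ)
    (hg : ∀ n : ℕ, β ∈ Set.Icc (l n) (r n) →
      |α - g n| ≤ c * (β - l n) + 2 ^ (-(n : ℤ))) :
    (∑' n : ℕ, (2 * (c * (r n - l n) + 2 ^ (-(n : ℤ))))) ≤ 4 + 2 * c * L ∧
    ∃ᶠ n in Filter.atTop,
      α ∈ Set.Icc (g n - (c * (r n - l n) + 2 ^ (-(n : ℤ))))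
                  (g n + (c * (r n - l n) + 2 ^ (-(n : ℤ)))) := by
  have hpow : HasSum (fun n : ℕ => (2 : ℝ) ^ (-(n : ℤ))) 2 := by
    have h := hasSum_geometric_of_lt_one (r := (1/2 : ℝ)) (by norm_num) (by norm_num)
    have : (1 - (1/2 : ℝ))⁻¹ = 2 := by norm_num
    rw [this] at h
    convert h using 2 with n
    rw [zpow_neg, ← zpow_natCast, ← inv_zpow, zpow_natCast]
    norm_num
  constructor
  · have hsum : HasSum (fun n : ℕ => 2 * (c * (r n - l n) + 2 ^ (-(n : ℤ))))
        (2 * (c * L + 2)) := (((hL.mul_left c).add hpow).mul_left 2)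
    rw [hsum.tsum_eq]
    nlinarith
  · refine hβ.mono fun n hn => ?_
    have h := hg n hn
    have h2 : |α - g n| ≤ c * (r n - l n) + 2 ^ (-(n : ℤ)) := by
      have : c * (β - l n) ≤ c * (r n - l n) :=
        mul_le_mul_of_nonneg_left (by linarith [hn.2]) hc.le
      linarith
    rw [abs_le] at h2
    constructor <;> linarith [h2.1, h2.2]
end

section
/- Let d = 2^K for a natural K ≥ 1 and let f : ℚ × ℕ → ℝ satisfy: |f(q, n) - f(q, m)| < 2^{-(m-K)} for all m < n, and |f(q, n) - f(p, n)| < d|q - p| + 2^{-(n-K)} for all p, q in the domain. Let (q_n) be a sequence of rationals with |q_{n+1} - q_n| < 2^{-n}, converging to a real x, and suppose f(q_n, n) is defined for all n. Then the sequence (f(q_n, n)) is Cauchy; moreover, its limit depends only on x (not on the choice of the effective approximation (q_n)), and the resulting function h(x) = lim_n f(q_n, n) is Lipschitz continuous with constant d on its domain. -/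
theorem stmt_19 (K : ℕ) (hK : 1 ≤ K) (d : ℝ) (hd : d = 2 ^ K)
    (D : Set ℚ) (f : ℚ → ℕ → ℝ)
    (h1 : ∀ q ∈ D, ∀ m n : ℕ, m < n → |f q n - f q m| < 2 ^ (-((m : ℤ) - K)))
    (h2 : ∀ p ∈ D, ∀ q ∈ D, ∀ n : ℕ,
      |f q n - f p n| < d * |(q : ℝ) - (p : ℝ)| + 2 ^ (-((n : ℤ) - K))) :
    (∀ q : ℕ → ℚ, (∀ n, q n ∈ D) → (∀ n : ℕ, |(q (n+1) : ℝ) - (q n : ℝ)| < 2 ^ (-(n : ℤ))) →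
      CauchySeq (fun n => f (q n) n)) ∧
    (∀ (x : ℝ) (qx qy : ℕ → ℚ) (yx yy : ℝ),
      (∀ n, qx n ∈ D) → (∀ n : ℕ, |(qx (n+1) : ℝ) - (qx n : ℝ)| < 2 ^ (-(n : ℤ))) →
      Filter.Tendsto (fun n => (qx n : ℝ)) Filter.atTop (nhds x) →
      (∀ n, qy n ∈ D) → (∀ n : ℕ, |(qy (n+1) : ℝ) - (qy n : ℝ)| < 2 ^ (-(n : ℤ))) →
      Filter.Tendsto (fun n => (qy n : ℝ)) Filter.atTop (nhds x) →
      Filter.Tendsto (fun n => f (qx n) n) Filter.atTop (nhds yx) →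
      Filter.Tendsto (fun n => f (qy n) n) Filter.atTop (nhds yy) →
      yx = yy) ∧
    (∀ (x y : ℝ) (qx qy : ℕ → ℚ) (yx yy : ℝ),
      (∀ n, qx n ∈ D) → (∀ n : ℕ, |(qx (n+1) : ℝ) - (qx n : ℝ)| < 2 ^ (-(n : ℤ))) →
      Filter.Tendsto (fun n => (qx n : ℝ)) Filter.atTop (nhds x) →
      (∀ n, qy n ∈ D) → (∀ n : ℕ, |(qy (n+1) : ℝ) - (qy n : ℝ)| < 2 ^ (-(n : ℤ))) →
      Filter.Tendsto (fun n => (qy n : ℝ)) Filter.atTop (nhds y) →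
      Filter.Tendsto (fun n => f (qx n) n) Filter.atTop (nhds yx) →
      Filter.Tendsto (fun n => f (qy n) n) Filter.atTop (nhds yy) →
      |yx - yy| ≤ d * |x - y|) := by
  -- auxiliary rewriting of the zpow bound
  have hzpow : ∀ n : ℕ, (2 : ℝ) ^ (-((n : ℤ) - K)) = 2 ^ K * (2⁻¹ : ℝ) ^ n := by
    intro n
    rw [neg_sub, zpow_sub₀ (by norm_num : (2:ℝ) ≠ 0), zpow_natCast, zpow_natCast,
      inv_pow]
    ring
  have hzpow2 : ∀ n : ℕ, (2 : ℝ) ^ (-(n : ℤ)) = (2⁻¹ : ℝ) ^ n := by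
    intro n
    rw [zpow_neg, zpow_natCast, inv_pow]
  -- the Lipschitz-type bound (part 3), proved first
  have lip : ∀ (x y : ℝ) (qx qy : ℕ → ℚ) (yx yy : ℝ),
      (∀ n, qx n ∈ D) → (∀ n : ℕ, |(qx (n+1) : ℝ) - (qx n : ℝ)| < 2 ^ (-(n : ℤ))) →
      Filter.Tendsto (fun n => (qx n : ℝ)) Filter.atTop (nhds x) →
      (∀ n, qy n ∈ D) → (∀ n : ℕ, |(qy (n+1) : ℝ) - (qy n : ℝ)| < 2 ^ (-(n : ℤ))) →
      Filter.Tendsto (fun n => (qy n : ℝ)) Filter.atTop (nhds y) →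
      Filter.Tendsto (fun n => f (qx n) n) Filter.atTop (nhds yx) →
      Filter.Tendsto (fun n => f (qy n) n) Filter.atTop (nhds yy) →
      |yx - yy| ≤ d * |x - y| := by
    intro x y qx qy yx yy hxD _ hxlim hyD _ hylim hfx hfy
    have hA : Filter.Tendsto (fun n => |f (qx n) n - f (qy n) n|)
        Filter.atTop (nhds |yx - yy|) := (hfx.sub hfy).abs
    have hB : Filter.Tendsto
        (fun n => d * |(qx n : ℝ) - (qy n : ℝ)| + 2 ^ K * (2⁻¹ : ℝ) ^ n)
        Filter.atTop (nhds (d * |x - y| + 2 ^ K * 0)) := by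
      exact (((hxlim.sub hylim).abs.const_mul d).add
        ((tendsto_pow_atTop_nhds_zero_of_lt_one (by norm_num) (by norm_num)).const_mul
          (2 ^ K : ℝ)))
    rw [mul_zero, add_zero] at hB
    refine le_of_tendsto_of_tendsto' hA hB ?_
    intro n
    have := h2 (qy n) (hyD n) (qx n) (hxD n) n
    rw [hzpow n] at this
    exact this.le
  refine ⟨?_, ?_, lip⟩
  · -- Cauchy
    intro q hD hq
    refine cauchySeq_of_le_geometric (1/2 : ℝ) (3 * 2 ^ K) (by norm_num) ?_
    intro n
    rw [Real.dist_eq]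
    have e1 : |f (q n) n - f (q (n+1)) n| <
        d * |(q n : ℝ) - (q (n+1) : ℝ)| + 2 ^ (-((n : ℤ) - K)) :=
      h2 (q (n+1)) (hD (n+1)) (q n) (hD n) n
    have e2 : |f (q (n+1)) (n+1) - f (q (n+1)) n| < 2 ^ (-((n : ℤ) - K)) :=
      h1 (q (n+1)) (hD (n+1)) n (n+1) (by omega)
    have hqd : |(q n : ℝ) - (q (n+1) : ℝ)| < (2⁻¹ : ℝ) ^ n := by
      have hqn := hq n
      rw [hzpow2 n] at hqn
      rw [abs_sub_comm]
      exact hqn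
    have key : |f (q n) n - f (q (n+1)) (n+1)| ≤
        d * (2⁻¹ : ℝ) ^ n + 2 ^ (-((n : ℤ) - K)) + 2 ^ (-((n : ℤ) - K)) := by
      have tri : |f (q n) n - f (q (n+1)) (n+1)| ≤
          |f (q n) n - f (q (n+1)) n| + |f (q (n+1)) (n+1) - f (q (n+1)) n| := by
        rw [show f (q n) n - f (q (n+1)) (n+1) =
          (f (q n) n - f (q (n+1)) n) - (f (q (n+1)) (n+1) - f (q (n+1)) n) by ring]
        exact abs_sub _ _
      have := mul_le_mul_of_nonneg_left hqd.le (by rw [hd]; positivity : (0:ℝ) ≤ d)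
      nlinarith [e1, e2, tri]
    calc |f (q n) n - f (q (n+1)) (n+1)|
        ≤ d * (2⁻¹ : ℝ) ^ n + 2 ^ (-((n : ℤ) - K)) + 2 ^ (-((n : ℤ) - K)) := key
      _ = 3 * 2 ^ K * (1/2) ^ n := by
          rw [hzpow n, hd]; rw [show ((1:ℝ)/2) = 2⁻¹ by norm_num]; ring
  · -- uniqueness of the limit
    intro x qx qy yx yy hxD hxa hxl hyD hya hyl hfx hfy
    have := lip x x qx qy yx yy hxD hxa hxl hyD hya hyl hfx hfy
    simp only [sub_self, abs_zero, mul_zero] at this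
    have h0 : |yx - yy| = 0 := le_antisymm this (abs_nonneg _)
    have := abs_eq_zero.mp h0
    linarith
end
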